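/- For m > 1/2, ∫_0^{ζ²} z^{m-1} K_0(2√z) dz = ζ^{2m} K_0(2ζ) ₁F₂(1; m, m+1; ζ²)/m + ζ^{2m+1} K_1(2ζ) ₁F₂(1; m+1, m+1; ζ²)/m², for any ζ > 0. -/

import Mathlib

open Real Filter Set MeasureTheory

/-- Modified Bessel function of the second kind of order `t`. -/
noncomputable def besselK (t x : ℝ) : ℝ :=
  ∫ u in Set.Ioi (0 : ℝ), Real.exp (-x * Real.cosh u) * Real.cosh (t * u)

/-- Generalized hypergeometric function `₁F₂(1; a, b; z)`. -/
noncomputable def oneF2 (a b z : ℝ) : ℝ :=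
  ∑' j : ℕ, z ^ j * (Real.Gamma a * Real.Gamma b) /
    (Real.Gamma (a + j) * Real.Gamma (b + j))

/-!
With `A(z) = K₀(2√z)` and `B(z) = √z K₁(2√z)` one has `A' = -B/z` and `B' = -A`, so
`z^p (A/p + B/p²)` is an antiderivative of `z^(p-1) A - z^p A/p²`. Hence `I(p) = ∫₀^X z^(p-1) A`
satisfies `I(p) = X^p A(X)/p + X^p B(X)/p² + I(p+1)/p²`. Iterating from `p = m` produces the partial
sums of the two ₁F₂ series, and the remainder `Γ(m)²/Γ(m+N)² · I(m+N)` is at most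
`Γ(m)² X^N/Γ(m+N)² · I(m)`, a term of a convergent ₁F₂ series, so it tends to zero.

The Bessel derivatives come from differentiating `∫₀^∞ e^{-x cosh u} coshⁿ u du` under the integral
sign, together with the integration by parts
`∫₀^∞ e^{-x cosh u} sinh² u du = x⁻¹ ∫₀^∞ e^{-x cosh u} cosh u du`.
-/

open Topology
open scoped Nat

lemma exp_neg_mul_cosh_mul_cosh_pow_le {x u : ℝ} (hx : 0 < x) (hu : 0 ≤ u) (n : ℕ) :
    exp (-x * cosh u) * cosh u ^ n ≤ n ! * (2 / x) ^ n * exp (-(x / 2) * u) := by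
  have hcosh : u ≤ cosh u := (self_le_sinh_iff.mpr hu).trans (sinh_lt_cosh u).le
  set t := x / 2 * cosh u with ht
  have hpow : t ^ n * exp (-t) ≤ n ! := by
    have := pow_div_factorial_le_exp t (by positivity) n
    rw [div_le_iff₀ (by positivity)] at this
    rw [exp_neg, ← div_eq_mul_inv, div_le_iff₀ (exp_pos t)]
    linarith
  have hdecay : exp (-t) ≤ exp (-(x / 2) * u) := exp_le_exp.mpr (by nlinarith)
  calc exp (-x * cosh u) * cosh u ^ n = (2 / x) ^ n * (t ^ n * exp (-t)) * exp (-t) := by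
        have hsplit : exp (-x * cosh u) = exp (-t) * exp (-t) := by rw [← exp_add, ht]; ring_nf
        have hcosh_eq : cosh u = 2 / x * t := by rw [ht]; field_simp
        rw [hsplit, hcosh_eq, mul_pow]; ring
    _ ≤ (2 / x) ^ n * n ! * exp (-(x / 2) * u) := by gcongr
    _ = _ := by ring

lemma integrableOn_exp_neg_mul_cosh_mul_cosh_pow {x : ℝ} (hx : 0 < x) (n : ℕ) :
    IntegrableOn (fun u => exp (-x * cosh u) * cosh u ^ n) (Ioi 0) := by
  refine ((exp_neg_integrableOn_Ioi 0 (half_pos hx)).const_mul (n ! * (2 / x) ^ n)).mono' ?_ ?_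
  · exact (by fun_prop : Continuous fun u => exp (-x * cosh u) * cosh u ^ n).aestronglyMeasurable
  · filter_upwards [ae_restrict_mem measurableSet_Ioi] with u hu
    rw [norm_of_nonneg (by positivity)]
    exact exp_neg_mul_cosh_mul_cosh_pow_le hx (le_of_lt hu) n

noncomputable def coshMoment (n : ℕ) (x : ℝ) : ℝ :=
  ∫ u in Ioi 0, exp (-x * cosh u) * cosh u ^ n

lemma besselK_zero_eq_coshMoment : besselK 0 = coshMoment 0 := by
  ext x; simp [besselK, coshMoment]

lemma besselK_one_eq_coshMoment : besselK 1 = coshMoment 1 := by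
  ext x; simp [besselK, coshMoment]

lemma coshMoment_le {x : ℝ} (hx : 0 < x) (n : ℕ) : coshMoment n x ≤ n ! * (2 / x) ^ (n + 1) := by
  calc coshMoment n x ≤ ∫ u in Ioi 0, n ! * (2 / x) ^ n * exp (-(x / 2) * u) :=
        setIntegral_mono_on (integrableOn_exp_neg_mul_cosh_mul_cosh_pow hx n)
          ((exp_neg_integrableOn_Ioi 0 (half_pos hx)).const_mul _) measurableSet_Ioi
          fun u hu => exp_neg_mul_cosh_mul_cosh_pow_le hx (le_of_lt hu) n
    _ = n ! * (2 / x) ^ (n + 1) := by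
        rw [integral_const_mul, integral_exp_mul_Ioi (by linarith) 0, mul_zero, exp_zero, pow_succ]
        field_simp

lemma hasDerivAt_coshMoment {x : ℝ} (hx : 0 < x) (n : ℕ) :
    HasDerivAt (coshMoment n) (-coshMoment (n + 1) x) x := by
  have hball : Metric.ball x (x / 2) ∈ 𝓝 x := Metric.ball_mem_nhds x (half_pos hx)
  have hderiv := hasDerivAt_integral_of_dominated_loc_of_deriv_le (μ := volume.restrict (Ioi 0))
    (F := fun y u => exp (-y * cosh u) * cosh u ^ n)
    (F' := fun y u => -(exp (-y * cosh u) * cosh u ^ (n + 1)))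
    (bound := fun u => exp (-(x / 2) * cosh u) * cosh u ^ (n + 1)) hball
    (Eventually.of_forall fun y => (by fun_prop : Continuous fun u =>
      exp (-y * cosh u) * cosh u ^ n).aestronglyMeasurable)
    (integrableOn_exp_neg_mul_cosh_mul_cosh_pow hx n)
    ((by fun_prop : Continuous fun u =>
      -(exp (-x * cosh u) * cosh u ^ (n + 1))).aestronglyMeasurable)
    ?_ (integrableOn_exp_neg_mul_cosh_mul_cosh_pow (half_pos hx) (n + 1)) ?_
  · have h := hderiv.2
    rwa [integral_neg] at h
  · refine Eventually.of_forall fun u y hy => ?_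
    have hy : x / 2 < y := by
      rw [Metric.mem_ball, Real.dist_eq, abs_lt] at hy; linarith [hy.1]
    rw [norm_neg, norm_of_nonneg (by positivity)]
    gcongr
  · refine Eventually.of_forall fun u y _ => ?_
    have hlin : HasDerivAt (fun y => -y * cosh u) (-cosh u) y := by
      simpa using (hasDerivAt_id y).neg.mul_const (cosh u)
    exact (hlin.exp.mul_const (cosh u ^ n)).congr_deriv (by ring)

lemma tendsto_sinh_mul_exp_neg_mul_cosh {x : ℝ} (hx : 0 < x) :
    Tendsto (fun u => sinh u * exp (-x * cosh u)) atTop (𝓝 0) := by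
  have hdecay : Tendsto (fun u => 1 ! * (2 / x) ^ 1 * exp (-(x / 2) * u)) atTop (𝓝 0) := by
    simpa using (tendsto_exp_atBot.comp
      (tendsto_id.const_mul_atTop_of_neg (neg_lt_zero.mpr (half_pos hx)))).const_mul (2 / x)
  refine squeeze_zero_norm' ?_ hdecay
  filter_upwards [eventually_ge_atTop 0] with u hu
  have hsinh : 0 ≤ sinh u := sinh_nonneg_iff.mpr hu
  calc ‖sinh u * exp (-x * cosh u)‖ ≤ exp (-x * cosh u) * cosh u ^ 1 := by
        rw [norm_of_nonneg (by positivity), pow_one, mul_comm]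
        gcongr
        exact (sinh_lt_cosh u).le
    _ ≤ _ := exp_neg_mul_cosh_mul_cosh_pow_le hx hu 1

lemma coshMoment_two {x : ℝ} (hx : 0 < x) :
    coshMoment 2 x = coshMoment 0 x + coshMoment 1 x / x := by
  have hint := integrableOn_exp_neg_mul_cosh_mul_cosh_pow hx
  have hderiv : ∀ u ∈ Ici (0 : ℝ), HasDerivAt (fun u => sinh u * exp (-x * cosh u))
      (x * (exp (-x * cosh u) * cosh u ^ 0) + exp (-x * cosh u) * cosh u ^ 1
        - x * (exp (-x * cosh u) * cosh u ^ 2)) u := by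
    intro u _
    refine ((hasDerivAt_sinh u).mul ((hasDerivAt_cosh u).const_mul (-x)).exp).congr_deriv ?_
    linear_combination (x * exp (-x * cosh u)) * cosh_sq u
  have hint01 : IntegrableOn (fun u => x * (exp (-x * cosh u) * cosh u ^ 0)
      + exp (-x * cosh u) * cosh u ^ 1) (Ioi 0) := ((hint 0).const_mul x).add (hint 1)
  have hftc := integral_Ioi_of_hasDerivAt_of_tendsto' hderiv
    (hint01.sub ((hint 2).const_mul x)) (tendsto_sinh_mul_exp_neg_mul_cosh hx)
  rw [integral_sub hint01 ((hint 2).const_mul x),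
    integral_add ((hint 0).const_mul x) (hint 1), integral_const_mul, integral_const_mul] at hftc
  rw [sinh_zero, zero_mul, sub_zero] at hftc
  change x * coshMoment 0 x + coshMoment 1 x - x * coshMoment 2 x = 0 at hftc
  field_simp
  linarith

lemma besselK_nonneg (t x : ℝ) : 0 ≤ besselK t x :=
  setIntegral_nonneg measurableSet_Ioi fun u _ => by positivity

lemma besselK_zero_le {x : ℝ} (hx : 0 < x) : besselK 0 x ≤ 2 / x := by
  simpa [besselK_zero_eq_coshMoment] using coshMoment_le hx 0

lemma besselK_one_le {x : ℝ} (hx : 0 < x) : besselK 1 x ≤ (2 / x) ^ 2 := by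
  simpa [besselK_one_eq_coshMoment] using coshMoment_le hx 1

lemma hasDerivAt_besselK_zero {x : ℝ} (hx : 0 < x) :
    HasDerivAt (besselK 0) (-besselK 1 x) x := by
  rw [besselK_zero_eq_coshMoment, besselK_one_eq_coshMoment]
  exact hasDerivAt_coshMoment hx 0

lemma hasDerivAt_besselK_one {x : ℝ} (hx : 0 < x) :
    HasDerivAt (besselK 1) (-besselK 0 x - besselK 1 x / x) x := by
  rw [besselK_zero_eq_coshMoment, besselK_one_eq_coshMoment, ← neg_add', ← coshMoment_two hx]
  exact hasDerivAt_coshMoment hx 1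

lemma hasDerivAt_two_mul_sqrt {z : ℝ} (hz : 0 < z) :
    HasDerivAt (fun w => 2 * √w) (√z)⁻¹ z := by
  refine ((hasDerivAt_sqrt hz.ne').const_mul 2).congr_deriv ?_
  field_simp

lemma hasDerivAt_besselK_zero_two_mul_sqrt {z : ℝ} (hz : 0 < z) :
    HasDerivAt (fun w => besselK 0 (2 * √w)) (-(√z * besselK 1 (2 * √z)) / z) z := by
  have hs : 0 < √z := sqrt_pos.mpr hz
  refine ((hasDerivAt_besselK_zero (by positivity)).comp z
    (hasDerivAt_two_mul_sqrt hz)).congr_deriv ?_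
  field_simp
  rw [sq_sqrt hz.le, mul_comm]

lemma hasDerivAt_sqrt_mul_besselK_one_two_mul_sqrt {z : ℝ} (hz : 0 < z) :
    HasDerivAt (fun w => √w * besselK 1 (2 * √w)) (-besselK 0 (2 * √z)) z := by
  have hs : 0 < √z := sqrt_pos.mpr hz
  refine ((hasDerivAt_sqrt hz.ne').mul ((hasDerivAt_besselK_one (by positivity)).comp z
    (hasDerivAt_two_mul_sqrt hz))).congr_deriv ?_
  rw [Function.comp_apply]
  field_simp
  ring

lemma besselK_zero_two_mul_sqrt_le {z : ℝ} (hz : 0 < z) :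
    besselK 0 (2 * √z) ≤ z ^ (-(1 / 2) : ℝ) := by
  have hs : 0 < √z := sqrt_pos.mpr hz
  calc besselK 0 (2 * √z) ≤ 2 / (2 * √z) := besselK_zero_le (by positivity)
    _ = z ^ (-(1 / 2) : ℝ) := by rw [rpow_neg hz.le, ← sqrt_eq_rpow]; field_simp

lemma sqrt_mul_besselK_one_two_mul_sqrt_le {z : ℝ} (hz : 0 < z) :
    √z * besselK 1 (2 * √z) ≤ z ^ (-(1 / 2) : ℝ) := by
  have hs : 0 < √z := sqrt_pos.mpr hz
  calc √z * besselK 1 (2 * √z) ≤ √z * (2 / (2 * √z)) ^ 2 := by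
        gcongr; exact besselK_one_le (by positivity)
    _ = z ^ (-(1 / 2) : ℝ) := by rw [rpow_neg hz.le, ← sqrt_eq_rpow]; field_simp

lemma tendsto_rpow_mul_of_le_rpow_neg_half {f : ℝ → ℝ} {p : ℝ} (hp : 1 / 2 < p)
    (hf_nonneg : ∀ z > 0, 0 ≤ f z) (hf_le : ∀ z > 0, f z ≤ z ^ (-(1 / 2) : ℝ)) :
    Tendsto (fun z => z ^ p * f z) (𝓝[>] 0) (𝓝 0) := by
  have hlim : Tendsto (fun z : ℝ => z ^ (p - 1 / 2)) (𝓝[>] 0) (𝓝 0) := by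
    have h := (continuousAt_rpow_const 0 (p - 1 / 2) (Or.inr (by linarith))).tendsto
    rw [zero_rpow (by linarith)] at h
    exact h.mono_left nhdsWithin_le_nhds
  refine squeeze_zero' ?_ ?_ hlim
  · filter_upwards [self_mem_nhdsWithin] with z (hz : 0 < z)
    exact mul_nonneg (rpow_nonneg hz.le p) (hf_nonneg z hz)
  · filter_upwards [self_mem_nhdsWithin] with z (hz : 0 < z)
    calc z ^ p * f z ≤ z ^ p * z ^ (-(1 / 2) : ℝ) := by gcongr; exact hf_le z hz
      _ = z ^ (p - 1 / 2) := by rw [← rpow_add hz]; ring_nf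

noncomputable def truncMellinK0 (X p : ℝ) : ℝ :=
  ∫ z in Ioc 0 X, z ^ (p - 1) * besselK 0 (2 * √z)

lemma integrableOn_rpow_mul_besselK_zero_two_mul_sqrt {p X : ℝ} (hp : 1 / 2 < p) (hX : 0 ≤ X) :
    IntegrableOn (fun z => z ^ (p - 1) * besselK 0 (2 * √z)) (Ioc 0 X) := by
  have hdom : IntegrableOn (fun z : ℝ => z ^ (p - 3 / 2)) (Ioc 0 X) := by
    have := intervalIntegral.intervalIntegrable_rpow' (a := 0) (b := X) (r := p - 3 / 2)
      (by linarith)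
    rwa [intervalIntegrable_iff_integrableOn_Ioc_of_le hX] at this
  refine hdom.mono' ?_ ?_
  · refine ContinuousOn.aestronglyMeasurable (fun z hz => ?_) measurableSet_Ioc
    exact ((continuousAt_rpow_const z _ (Or.inl hz.1.ne')).mul
      (hasDerivAt_besselK_zero_two_mul_sqrt hz.1).continuousAt).continuousWithinAt
  · filter_upwards [ae_restrict_mem measurableSet_Ioc] with z hz
    have hzp := rpow_nonneg hz.1.le (p - 1)
    rw [norm_of_nonneg (mul_nonneg hzp (besselK_nonneg _ _))]
    calc z ^ (p - 1) * besselK 0 (2 * √z) ≤ z ^ (p - 1) * z ^ (-(1 / 2) : ℝ) := by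
          gcongr; exact besselK_zero_two_mul_sqrt_le hz.1
      _ = z ^ (p - 3 / 2) := by rw [← rpow_add hz.1]; ring_nf

lemma truncMellinK0_nonneg (X p : ℝ) : 0 ≤ truncMellinK0 X p :=
  setIntegral_nonneg measurableSet_Ioc fun _ hz =>
    mul_nonneg (rpow_nonneg hz.1.le _) (besselK_nonneg _ _)

lemma truncMellinK0_add_nat_le {p X : ℝ} (hp : 1 / 2 < p) (hX : 0 ≤ X) (n : ℕ) :
    truncMellinK0 X (p + n) ≤ X ^ n * truncMellinK0 X p := by
  have hpn : 1 / 2 < p + n := by linarith [(n.cast_nonneg : (0 : ℝ) ≤ n)]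
  rw [truncMellinK0, truncMellinK0, ← integral_const_mul]
  refine setIntegral_mono_on (integrableOn_rpow_mul_besselK_zero_two_mul_sqrt hpn hX)
    ((integrableOn_rpow_mul_besselK_zero_two_mul_sqrt hp hX).const_mul _) measurableSet_Ioc
    fun z hz => ?_
  have hK := besselK_nonneg 0 (2 * √z)
  have hzp := rpow_nonneg hz.1.le (p - 1)
  calc z ^ (p + n - 1) * besselK 0 (2 * √z) = z ^ (p - 1) * z ^ n * besselK 0 (2 * √z) := by
        rw [← rpow_natCast, ← rpow_add hz.1]; ring_nf
    _ ≤ z ^ (p - 1) * X ^ n * besselK 0 (2 * √z) := by gcongr; exacts [hz.1.le, hz.2]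
    _ = X ^ n * (z ^ (p - 1) * besselK 0 (2 * √z)) := by ring

lemma hasDerivAt_rpow_mul_besselK_combination {p z : ℝ} (hp : p ≠ 0) (hz : 0 < z) :
    HasDerivAt (fun w => w ^ p * besselK 0 (2 * √w) / p + w ^ p * (√w * besselK 1 (2 * √w)) / p ^ 2)
      (z ^ (p - 1) * besselK 0 (2 * √z) - z ^ p * besselK 0 (2 * √z) / p ^ 2) z := by
  have hrpow := hasDerivAt_rpow_const (p := p) (Or.inl hz.ne')
  refine (((hrpow.mul (hasDerivAt_besselK_zero_two_mul_sqrt hz)).div_const p).add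
    ((hrpow.mul (hasDerivAt_sqrt_mul_besselK_one_two_mul_sqrt hz)).div_const (p ^ 2))).congr_deriv
    ?_
  have hzp : z ^ p = z ^ (p - 1) * z := by rw [rpow_sub_one hz.ne', div_mul_cancel₀ _ hz.ne']
  rw [hzp]
  field_simp
  ring

lemma truncMellinK0_eq_add {p X : ℝ} (hp : 1 / 2 < p) (hX : 0 < X) :
    truncMellinK0 X p = X ^ p * besselK 0 (2 * √X) / p
      + X ^ p * (√X * besselK 1 (2 * √X)) / p ^ 2 + truncMellinK0 X (p + 1) / p ^ 2 := by
  have hp0 : p ≠ 0 := by positivity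
  have hderiv := fun z (hz : 0 < z) => hasDerivAt_rpow_mul_besselK_combination hp0 hz
  have hlim0 : Tendsto (fun w => w ^ p * besselK 0 (2 * √w) / p
      + w ^ p * (√w * besselK 1 (2 * √w)) / p ^ 2) (𝓝[>] 0) (𝓝 0) := by
    simpa using ((tendsto_rpow_mul_of_le_rpow_neg_half hp (fun z _ => besselK_nonneg _ _)
      fun z hz => besselK_zero_two_mul_sqrt_le hz).div_const p).add
      ((tendsto_rpow_mul_of_le_rpow_neg_half hp
        (fun z _ => mul_nonneg (sqrt_nonneg z) (besselK_nonneg _ _))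
        fun z hz => sqrt_mul_besselK_one_two_mul_sqrt_le hz).div_const (p ^ 2))
  have hint0 := integrableOn_rpow_mul_besselK_zero_two_mul_sqrt hp hX.le
  have hint1 : IntegrableOn (fun z => z ^ p * besselK 0 (2 * √z)) (Ioc 0 X) := by
    simpa using integrableOn_rpow_mul_besselK_zero_two_mul_sqrt (p := p + 1) (by linarith) hX.le
  have hint : IntegrableOn (fun z => z ^ (p - 1) * besselK 0 (2 * √z)
      - z ^ p * besselK 0 (2 * √z) / p ^ 2) (Ioc 0 X) := hint0.sub (hint1.div_const _)
  have hftc := intervalIntegral.integral_eq_sub_of_hasDerivAt_of_tendsto hX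
    (fun z hz => hderiv z hz.1)
    ((intervalIntegrable_iff_integrableOn_Ioc_of_le hX.le).mpr hint) hlim0
    ((hderiv X hX).continuousAt.tendsto.mono_left nhdsWithin_le_nhds)
  rw [intervalIntegral.integral_of_le hX.le, integral_sub hint0 (hint1.div_const _),
    integral_div, sub_zero] at hftc
  simp only [truncMellinK0, add_sub_cancel_right]
  linarith

noncomputable def oneF2Term (a b z : ℝ) (j : ℕ) : ℝ :=
  z ^ j * (Gamma a * Gamma b) / (Gamma (a + j) * Gamma (b + j))

lemma oneF2_eq_tsum (a b z : ℝ) : oneF2 a b z = ∑' j, oneF2Term a b z j := rfl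

lemma oneF2Term_comm (a b z : ℝ) : oneF2Term a b z = oneF2Term b a z := by
  ext j; simp only [oneF2Term, mul_comm]

lemma oneF2Term_zero {a b : ℝ} (ha : 0 < a) (hb : 0 < b) (z : ℝ) : oneF2Term a b z 0 = 1 := by
  have := Gamma_pos_of_pos ha; have := Gamma_pos_of_pos hb
  simp only [oneF2Term, pow_zero, one_mul, Nat.cast_zero, add_zero]
  exact div_self (by positivity)

lemma oneF2Term_nonneg {a b z : ℝ} (ha : 0 < a) (hb : 0 < b) (hz : 0 ≤ z) (j : ℕ) :
    0 ≤ oneF2Term a b z j := by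
  have := Gamma_pos_of_pos ha; have := Gamma_pos_of_pos hb
  have := Gamma_pos_of_pos (s := a + j) (by positivity)
  have := Gamma_pos_of_pos (s := b + j) (by positivity)
  unfold oneF2Term; positivity

lemma oneF2Term_succ {a b : ℝ} (ha : 0 < a) (hb : 0 < b) (z : ℝ) (j : ℕ) :
    oneF2Term a b z (j + 1) = oneF2Term a b z j * z / ((a + j) * (b + j)) := by
  have haj : 0 < a + j := by positivity
  have hbj : 0 < b + j := by positivity
  have := Gamma_pos_of_pos haj; have := Gamma_pos_of_pos hbj
  simp only [oneF2Term, Nat.cast_succ, ← add_assoc, Gamma_add_one haj.ne', Gamma_add_one hbj.ne']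
  field_simp
  ring

lemma oneF2Term_add_one_left {a : ℝ} (ha : 0 < a) (b z : ℝ) (j : ℕ) :
    oneF2Term (a + 1) b z j = a * oneF2Term a b z j / (a + j) := by
  have haj : 0 < a + j := by positivity
  have := Gamma_pos_of_pos haj
  simp only [oneF2Term, add_right_comm a 1, Gamma_add_one haj.ne', Gamma_add_one ha.ne']
  field_simp

lemma oneF2Term_add_one_right {b : ℝ} (hb : 0 < b) (a z : ℝ) (j : ℕ) :
    oneF2Term a (b + 1) z j = b * oneF2Term a b z j / (b + j) := by
  rw [oneF2Term_comm, oneF2Term_add_one_left hb, oneF2Term_comm]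

lemma summable_oneF2Term {a b : ℝ} (ha : 0 < a) (hb : 0 < b) (z : ℝ) :
    Summable (oneF2Term a b z) := by
  refine summable_of_ratio_norm_eventually_le (r := 1 / 2) (by norm_num) ?_
  filter_upwards [tendsto_natCast_atTop_atTop.eventually_ge_atTop (2 * |z| / b)] with j hj
  have hj0 : (0 : ℝ) ≤ j := j.cast_nonneg
  have hprod : 2 * |z| ≤ (a + j) * (b + j) := by
    rw [div_le_iff₀ hb] at hj
    nlinarith
  rw [oneF2Term_succ ha hb, norm_div, norm_mul,
    norm_of_nonneg (by positivity : 0 ≤ (a + j) * (b + j)), div_le_iff₀ (by positivity),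
    Real.norm_eq_abs z]
  nlinarith [norm_nonneg (oneF2Term a b z j)]

/-- The remainder coefficient `oneF2Term m m X N / X ^ N` is `Γ(m)² / Γ(m + N)²`. -/
lemma truncMellinK0_eq_sum_add {m X : ℝ} (hm : 1 / 2 < m) (hX : 0 < X) (N : ℕ) :
    truncMellinK0 X m = ∑ j ∈ Finset.range N,
        (X ^ m * besselK 0 (2 * √X) / m * oneF2Term m (m + 1) X j
          + X ^ m * (√X * besselK 1 (2 * √X)) / m ^ 2 * oneF2Term (m + 1) (m + 1) X j)
      + oneF2Term m m X N * (truncMellinK0 X (m + N) / X ^ N) := by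
  have hm0 : 0 < m := by linarith
  induction N with
  | zero => simp [oneF2Term_zero hm0 hm0]
  | succ N ih =>
    rw [ih, Finset.sum_range_succ, add_assoc]
    congr 1
    rw [truncMellinK0_eq_add (p := m + N) (by linarith [(N.cast_nonneg : (0 : ℝ) ≤ N)]) hX,
      oneF2Term_succ hm0 hm0, oneF2Term_add_one_left hm0, oneF2Term_add_one_right hm0,
      rpow_add hX, rpow_natCast, Nat.cast_succ, ← add_assoc, pow_succ]
    field_simp
    ring

lemma tendsto_oneF2Term_mul_truncMellinK0 {m X : ℝ} (hm : 1 / 2 < m) (hX : 0 < X) :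
    Tendsto (fun N : ℕ => oneF2Term m m X N * (truncMellinK0 X (m + N) / X ^ N)) atTop (𝓝 0) := by
  have hm0 : 0 < m := by linarith
  have hT := (summable_oneF2Term hm0 hm0 X).tendsto_atTop_zero.mul_const (truncMellinK0 X m)
  rw [zero_mul] at hT
  refine squeeze_zero (fun N => ?_) (fun N => ?_) hT
  · have := oneF2Term_nonneg hm0 hm0 hX.le N
    have := truncMellinK0_nonneg X (m + N)
    positivity
  · gcongr
    · exact oneF2Term_nonneg hm0 hm0 hX.le N
    · rw [div_le_iff₀ (by positivity), mul_comm]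
      exact truncMellinK0_add_nat_le hm hX.le N

lemma tendsto_sum_range_truncMellinK0 {m X : ℝ} (hm : 1 / 2 < m) (hX : 0 < X) :
    Tendsto (fun N => ∑ j ∈ Finset.range N,
        (X ^ m * besselK 0 (2 * √X) / m * oneF2Term m (m + 1) X j
          + X ^ m * (√X * besselK 1 (2 * √X)) / m ^ 2 * oneF2Term (m + 1) (m + 1) X j))
      atTop (𝓝 (truncMellinK0 X m)) := by
  have hlim := (tendsto_const_nhds (x := truncMellinK0 X m)).sub
    (tendsto_oneF2Term_mul_truncMellinK0 hm hX)
  rw [sub_zero] at hlim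
  refine hlim.congr fun N => ?_
  rw [truncMellinK0_eq_sum_add hm hX N, add_sub_cancel_right]

lemma truncMellinK0_eq_oneF2 {m X : ℝ} (hm : 1 / 2 < m) (hX : 0 < X) :
    truncMellinK0 X m = X ^ m * besselK 0 (2 * √X) / m * oneF2 m (m + 1) X
      + X ^ m * (√X * besselK 1 (2 * √X)) / m ^ 2 * oneF2 (m + 1) (m + 1) X := by
  have hm0 : 0 < m := by linarith
  have hs₁ : Summable fun j => X ^ m * besselK 0 (2 * √X) / m * oneF2Term m (m + 1) X j :=
    (summable_oneF2Term hm0 (by linarith) X).mul_left _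
  have hs₂ : Summable fun j =>
      X ^ m * (√X * besselK 1 (2 * √X)) / m ^ 2 * oneF2Term (m + 1) (m + 1) X j :=
    (summable_oneF2Term (by linarith) (by linarith) X).mul_left _
  rw [← ((hs₁.add hs₂).hasSum_iff_tendsto_nat.mpr (tendsto_sum_range_truncMellinK0 hm hX)).tsum_eq,
    hs₁.tsum_add hs₂, tsum_mul_left, tsum_mul_left,
    oneF2_eq_tsum, oneF2_eq_tsum]

theorem stmt_10 (m : ℝ) (hm : 1 / 2 < m) (ζ : ℝ) (hζ : 0 < ζ) :
    ∫ z in Set.Ioc (0 : ℝ) (ζ ^ 2), z ^ (m - 1) * besselK 0 (2 * Real.sqrt z)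
      = ζ ^ (2 * m) * besselK 0 (2 * ζ) * oneF2 m (m + 1) (ζ ^ 2) / m
        + ζ ^ (2 * m + 1) * besselK 1 (2 * ζ) * oneF2 (m + 1) (m + 1) (ζ ^ 2) / m ^ 2 := by
  have hsqrt : √(ζ ^ 2) = ζ := sqrt_sq hζ.le
  have hpow : (ζ ^ 2) ^ m = ζ ^ (2 * m) := by
    rw [← rpow_natCast, ← rpow_mul hζ.le, Nat.cast_ofNat]
  have hpow_succ : ζ ^ (2 * m + 1) = ζ ^ (2 * m) * ζ := by rw [rpow_add hζ, rpow_one]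
  change truncMellinK0 (ζ ^ 2) m = _
  rw [truncMellinK0_eq_oneF2 hm (by positivity), hsqrt, hpow, hpow_succ]
  ring
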